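/- arXiv:2002.00268 — 2 statements merged into one kernel-verified Lean document; each statement's English description precedes it below -/
import Mathlib

section
/- Let E be an arbitrary set. The maps I ↦ Î := {Z(f) : f ∈ I} and Φ ↦ Φ̌ := {f ∈ C^∞(ℝ^E) : Z(f) ∈ Φ} are mutually inverse, inclusion-preserving bijections between the set of all filters of zerosets of ℝ^E and the set of all C^∞-radical ideals of C^∞(ℝ^E); moreover, they restrict to mutually inverse bijections between proper filters of zerosets and proper C^∞-radical ideals. -/
noncomputable section

open Set

/-- The continuous linear "restriction" map `ℝ^t → ℝ^s` for `s ⊆ t`. -/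
def restrCLM {E : Type} (s t : Finset E) (h : s ⊆ t) : (↥t → ℝ) →L[ℝ] (↥s → ℝ) :=
  LinearMap.toContinuousLinearMap
    (LinearMap.funLeft ℝ ℝ (fun i : ↥s => (⟨i.1, h i.2⟩ : ↥t)))

/-- A function `f : ℝ^E → ℝ` is (`C^∞`-)smooth iff it factors through the projection onto
finitely many coordinates via an infinitely differentiable function. -/
def IsCinf {E : Type} (f : (E → ℝ) → ℝ) : Prop :=
  ∃ (s : Finset E) (g : (↥s → ℝ) → ℝ),
    ContDiff ℝ (⊤ : ℕ∞) g ∧ ∀ v : E → ℝ, f v = g (fun i => v i.1)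

theorem IsCinf.enlarge {E : Type} {f : (E → ℝ) → ℝ} {s : Finset E} {g : (↥s → ℝ) → ℝ}
    (hg : ContDiff ℝ (⊤ : ℕ∞) g) (hfg : ∀ v, f v = g (fun i => v i.1))
    (t : Finset E) (hst : s ⊆ t) :
    ∃ g' : (↥t → ℝ) → ℝ, ContDiff ℝ (⊤ : ℕ∞) g' ∧ ∀ v, f v = g' (fun i => v i.1) := by
  refine ⟨g ∘ restrCLM s t hst, hg.comp (restrCLM s t hst).contDiff, fun v => ?_⟩
  have h1 : (restrCLM s t hst) (fun i : ↥t => v i.1) = fun i : ↥s => v i.1 := rfl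
  simp only [Function.comp_apply, h1]
  exact hfg v

/-- The ring `C^∞(ℝ^E)` of smooth functions `ℝ^E → ℝ`, as a subring of the ring of all
functions `ℝ^E → ℝ` with pointwise operations. -/
def Cinf (E : Type) : Subring ((E → ℝ) → ℝ) where
  carrier := {f | IsCinf f}
  zero_mem' := ⟨∅, fun _ => 0, contDiff_const, fun _ => rfl⟩
  one_mem' := ⟨∅, fun _ => 1, contDiff_const, fun _ => rfl⟩
  neg_mem' := by
    rintro f ⟨s, g, hg, hfg⟩
    exact ⟨s, -g, hg.neg, fun v => by simp [hfg v]⟩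
  add_mem' := by
    rintro f₁ f₂ ⟨s, g₁, hg₁, hfg₁⟩ ⟨t, g₂, hg₂, hfg₂⟩
    haveI := Classical.decEq E
    obtain ⟨g₁', hg₁', hfg₁'⟩ := IsCinf.enlarge hg₁ hfg₁ (s ∪ t) Finset.subset_union_left
    obtain ⟨g₂', hg₂', hfg₂'⟩ := IsCinf.enlarge hg₂ hfg₂ (s ∪ t) Finset.subset_union_right
    exact ⟨s ∪ t, g₁' + g₂', hg₁'.add hg₂', fun v => by
      simp only [Pi.add_apply, hfg₁' v, hfg₂' v]⟩
  mul_mem' := by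
    rintro f₁ f₂ ⟨s, g₁, hg₁, hfg₁⟩ ⟨t, g₂, hg₂, hfg₂⟩
    haveI := Classical.decEq E
    obtain ⟨g₁', hg₁', hfg₁'⟩ := IsCinf.enlarge hg₁ hfg₁ (s ∪ t) Finset.subset_union_left
    obtain ⟨g₂', hg₂', hfg₂'⟩ := IsCinf.enlarge hg₂ hfg₂ (s ∪ t) Finset.subset_union_right
    exact ⟨s ∪ t, g₁' * g₂', hg₁'.mul hg₂', fun v => by
      simp only [Pi.mul_apply, hfg₁' v, hfg₂' v]⟩

/-- The zeroset of a smooth function on `ℝ^E`. -/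
def Z {E : Type} (f : Cinf E) : Set (E → ℝ) := {v | (f : (E → ℝ) → ℝ) v = 0}

/-- An ideal `I ⊆ C^∞(ℝ^E)` is `C^∞`-radical iff it contains every function whose zeroset
contains the zeroset of some member of `I`. -/
def IsCinfRadical {E : Type} (I : Ideal (Cinf E)) : Prop :=
  ∀ g : Cinf E, (∃ f ∈ I, Z f ⊆ Z g) → g ∈ I

/-- The collection of zerosets of `ℝ^E`. -/
def zeroSets (E : Type) : Set (Set (E → ℝ)) := {X | ∃ f : Cinf E, X = Z f}

/-- A filter of zerosets of `ℝ^E`. -/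
def IsZFilter {E : Type} (Φ : Set (Set (E → ℝ))) : Prop :=
  Φ ⊆ zeroSets E ∧ (Set.univ : Set (E → ℝ)) ∈ Φ ∧
    (∀ F ∈ Φ, ∀ G ∈ Φ, F ∩ G ∈ Φ) ∧
    (∀ F ∈ Φ, ∀ H ∈ zeroSets E, F ⊆ H → H ∈ Φ)

/-- `Ŝ`: the set of zerosets of members of a set `S ⊆ C^∞(ℝ^E)`. -/
def hatSet {E : Type} (S : Set (Cinf E)) : Set (Set (E → ℝ)) := {X | ∃ f ∈ S, X = Z f}

/-- `Î`: the set of zerosets of members of the ideal `I`. -/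
def hatI {E : Type} (I : Ideal (Cinf E)) : Set (Set (E → ℝ)) := hatSet (I : Set (Cinf E))

/-- `Φ̌`: the set of smooth functions whose zeroset belongs to `Φ`. -/
def checkSet {E : Type} (Φ : Set (Set (E → ℝ))) : Set (Cinf E) := {f : Cinf E | Z f ∈ Φ}

end

/-! The whole correspondence rests on three identities for zerosets: `Z 0 = ℝ^E`, `Z 1 = ∅`
and `Z (f² + g²) = Z f ∩ Z g`, together with `Z f ∩ Z g ⊆ Z (f + g)` and `Z f ⊆ Z (c * f)`.
The last two make `Φ̌` an ideal for an upward closed `Φ`; conversely `C^∞`-radicality of `I`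
is precisely what makes `Î` upward closed and `f ∈ I` depend only on `Z f`, so that `Î̌ = I`.
Properness matches because `1 ∈ I` iff `∅ = Z 1 ∈ Î`. -/

open Set

namespace Cinf

variable {E : Type}

@[simp]
lemma mem_Z {f : Cinf E} {v : E → ℝ} : v ∈ Z f ↔ (f : (E → ℝ) → ℝ) v = 0 := Iff.rfl

lemma Z_mem_zeroSets (f : Cinf E) : Z f ∈ zeroSets E := ⟨f, rfl⟩

@[simp]
lemma Z_zero : Z (0 : Cinf E) = univ := by
  ext v; simp

@[simp]
lemma Z_one : Z (1 : Cinf E) = ∅ := by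
  ext v; simp

lemma Z_sq_add_sq (f g : Cinf E) : Z (f ^ 2 + g ^ 2) = Z f ∩ Z g := by
  ext v
  simp only [mem_Z, mem_inter_iff, Subring.coe_add, Subring.coe_pow, Pi.add_apply, Pi.pow_apply]
  constructor
  · intro h
    constructor <;> nlinarith [sq_nonneg ((f : (E → ℝ) → ℝ) v), sq_nonneg ((g : (E → ℝ) → ℝ) v)]
  · rintro ⟨hf, hg⟩
    simp [hf, hg]

lemma Z_inter_subset_Z_add (f g : Cinf E) : Z f ∩ Z g ⊆ Z (f + g) := by
  rintro v ⟨hf, hg⟩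
  simp_all

lemma Z_subset_Z_mul (c f : Cinf E) : Z f ⊆ Z (c * f) := by
  intro v hf
  simp_all

end Cinf

open Cinf

section FilterToIdeal

variable {E : Type} {Φ : Set (Set (E → ℝ))}

def IsZFilter.checkIdeal (hΦ : IsZFilter Φ) : Ideal (Cinf E) where
  carrier := checkSet Φ
  zero_mem' := by simpa [checkSet] using hΦ.2.1
  add_mem' {f g} hf hg :=
    hΦ.2.2.2 _ (hΦ.2.2.1 _ hf _ hg) _ (Z_mem_zeroSets _) (Z_inter_subset_Z_add f g)
  smul_mem' c f hf := hΦ.2.2.2 _ hf _ (Z_mem_zeroSets _) (Z_subset_Z_mul c f)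

lemma IsZFilter.coe_checkIdeal (hΦ : IsZFilter Φ) :
    (hΦ.checkIdeal : Set (Cinf E)) = checkSet Φ := rfl

lemma IsZFilter.isCinfRadical_checkIdeal (hΦ : IsZFilter Φ) : IsCinfRadical hΦ.checkIdeal := by
  rintro g ⟨f, hf, hfg⟩
  exact hΦ.2.2.2 _ hf _ (Z_mem_zeroSets g) hfg

lemma IsZFilter.hatI_checkIdeal (hΦ : IsZFilter Φ) : hatI hΦ.checkIdeal = Φ := by
  ext X
  constructor
  · rintro ⟨f, hf, rfl⟩
    exact hf
  · intro hX
    obtain ⟨f, rfl⟩ := hΦ.1 hX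
    exact ⟨f, hX, rfl⟩

lemma IsZFilter.checkIdeal_ne_top (hΦ : IsZFilter Φ) (hproper : ∅ ∉ Φ) :
    hΦ.checkIdeal ≠ ⊤ := by
  intro htop
  have hone : (1 : Cinf E) ∈ hΦ.checkIdeal := htop ▸ Submodule.mem_top
  exact hproper (Z_one (E := E) ▸ hone)

lemma checkSet_mono {Φ₁ Φ₂ : Set (Set (E → ℝ))} (h : Φ₁ ⊆ Φ₂) :
    checkSet Φ₁ ⊆ (checkSet Φ₂ : Set (Cinf E)) :=
  fun _ hf => h hf

end FilterToIdeal

section IdealToFilter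

variable {E : Type} {I : Ideal (Cinf E)}

lemma IsCinfRadical.isZFilter_hatI (hI : IsCinfRadical I) : IsZFilter (hatI I) := by
  refine ⟨?_, ⟨0, I.zero_mem, Z_zero.symm⟩, ?_, ?_⟩
  · rintro X ⟨f, -, rfl⟩
    exact Z_mem_zeroSets f
  · rintro F ⟨f, hf, rfl⟩ G ⟨g, hg, rfl⟩
    exact ⟨f ^ 2 + g ^ 2, I.add_mem (I.pow_mem_of_mem hf 2 two_pos)
      (I.pow_mem_of_mem hg 2 two_pos), (Z_sq_add_sq f g).symm⟩
  · rintro F ⟨f, hf, rfl⟩ H ⟨g, rfl⟩ hfg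
    exact ⟨g, hI g ⟨f, hf, hfg⟩, rfl⟩

lemma IsCinfRadical.checkSet_hatI (hI : IsCinfRadical I) :
    checkSet (hatI I) = (I : Set (Cinf E)) := by
  ext f
  constructor
  · rintro ⟨g, hg, hgf⟩
    exact hI f ⟨g, hg, hgf.symm.subset⟩
  · intro hf
    exact ⟨f, hf, rfl⟩

lemma IsCinfRadical.empty_notMem_hatI (hI : IsCinfRadical I) (hproper : I ≠ ⊤) :
    ∅ ∉ hatI I := by
  rintro ⟨f, hf, hf_empty⟩
  exact hproper <| (Ideal.eq_top_iff_one I).mpr <| hI 1 ⟨f, hf, hf_empty ▸ empty_subset _⟩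

lemma hatI_mono {I₁ I₂ : Ideal (Cinf E)} (h : I₁ ≤ I₂) : hatI I₁ ⊆ hatI I₂ := by
  rintro X ⟨f, hf, rfl⟩
  exact ⟨f, h hf, rfl⟩

end IdealToFilter

/-- `I ↦ Î` and `Φ ↦ Φ̌` are mutually inverse inclusion-preserving
bijections between filters of zerosets of `ℝ^E` and `C^∞`-radical ideals of `C^∞(ℝ^E)`,
restricting to bijections between proper filters and proper `C^∞`-radical ideals. -/
theorem statement10 (E : Type) :
    (∀ Φ : Set (Set (E → ℝ)), IsZFilter Φ →
      ∃ J : Ideal (Cinf E), (J : Set (Cinf E)) = checkSet Φ ∧ IsCinfRadical J ∧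
        hatI J = Φ ∧ ((∅ : Set (E → ℝ)) ∉ Φ → J ≠ ⊤)) ∧
    (∀ I : Ideal (Cinf E), IsCinfRadical I →
      IsZFilter (hatI I) ∧ checkSet (hatI I) = (I : Set (Cinf E)) ∧
        (I ≠ ⊤ → (∅ : Set (E → ℝ)) ∉ hatI I)) ∧
    (∀ Φ₁ Φ₂ : Set (Set (E → ℝ)), IsZFilter Φ₁ → IsZFilter Φ₂ → Φ₁ ⊆ Φ₂ →
      checkSet Φ₁ ⊆ checkSet Φ₂) ∧
    (∀ I₁ I₂ : Ideal (Cinf E), I₁ ≤ I₂ → hatI I₁ ⊆ hatI I₂) :=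
  ⟨fun _ hΦ => ⟨hΦ.checkIdeal, hΦ.coe_checkIdeal, hΦ.isCinfRadical_checkIdeal,
      hΦ.hatI_checkIdeal, hΦ.checkIdeal_ne_top⟩,
    fun _ hI => ⟨hI.isZFilter_hatI, hI.checkSet_hatI, hI.empty_notMem_hatI⟩,
    fun _ _ _ _ => checkSet_mono,
    fun _ _ => hatI_mono⟩
end

section
/- Let E be an arbitrary set, let I be a C^∞-radical ideal of C^∞(ℝ^E), and let A := C^∞(ℝ^E)/I. Write A^× for the units of A, ΣA² for the set of finite sums of squares of elements of A, and (A^×)² := {u² : u ∈ A^×}. Then: (1) (ΣA²) ∩ A^× = (A^×)², i.e. every unit of A that is a finite sum of squares is the square of a unit; (2) (A^×)² + ΣA² = (A^×)², i.e. whenever u ∈ A^× and s ∈ ΣA², the element u² + s is the square of a unit of A; (3) every finite nonempty sum of squares of units of A is the square of a unit of A. -/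
/-!
A smooth function on `ℝ^E` that is strictly positive everywhere is the square of a smooth unit,
namely of its square root. So it suffices to show that the elements of `A` in question have an
everywhere positive representative. A sum of squares has a nonnegative representative `f`; if
its class is a unit with inverse the class of `g`, then `f + (f g - 1)²` represents the same
class and is positive, since it equals `1` wherever `f` vanishes.
-/

open Ideal.Quotient

theorem IsSumSq.exists_preimage_of_surjective {R S : Type*} [Semiring R] [Semiring S]
    {φ : R →+* S} (hφ : Function.Surjective φ) {a : S} (ha : IsSumSq a) :
    ∃ b, IsSumSq b ∧ φ b = a := by
  induction ha with
  | zero => exact ⟨0, .zero, map_zero φ⟩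
  | sq_add c _ ih =>
    obtain ⟨b, hb, rfl⟩ := ih
    obtain ⟨d, rfl⟩ := hφ c
    exact ⟨d * d + b, .sq_add d hb, by rw [map_add, map_mul]⟩

variable {E : Type}

theorem IsCinf.comp {f : (E → ℝ) → ℝ} (hf : IsCinf f) {φ : ℝ → ℝ}
    (hφ : ∀ v, ContDiffAt ℝ (⊤ : ℕ∞) φ (f v)) : IsCinf (φ ∘ f) := by
  classical
  obtain ⟨s, g, hg, hfg⟩ := hf
  refine ⟨s, φ ∘ g, contDiff_iff_contDiffAt.2 fun x => ?_, fun v => by simp [hfg v]⟩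
  -- `g` takes only values of `f`: every point of `ℝ^s` is the restriction of a point of `ℝ^E`.
  let v : E → ℝ := fun e => if h : e ∈ s then x ⟨e, h⟩ else 0
  have hv : (fun i : ↥s => v i.1) = x := funext fun i => by simp [v, i.2]
  have hφx : ContDiffAt ℝ (⊤ : ℕ∞) φ (g x) := by simpa only [hfg v, hv] using hφ v
  exact hφx.comp x hg.contDiffAt

namespace Cinf

theorem isSumSq_nonneg {f : Cinf E} (hf : IsSumSq f) (v : E → ℝ) :
    0 ≤ (f : (E → ℝ) → ℝ) v := by
  induction hf with
  | zero => rfl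
  | sq_add g _ ih => exact add_nonneg (mul_self_nonneg ((g : (E → ℝ) → ℝ) v)) ih

theorem isUnit_of_pos {f : Cinf E} (hf : ∀ v, 0 < (f : (E → ℝ) → ℝ) v) : IsUnit f :=
  isUnit_iff_exists_inv.2
    ⟨⟨_, f.2.comp fun v => contDiffAt_inv ℝ (hf v).ne'⟩,
      Subtype.ext <| funext fun v => mul_inv_cancel₀ (hf v).ne'⟩

theorem exists_isUnit_sq_eq_of_pos {f : Cinf E} (hf : ∀ v, 0 < (f : (E → ℝ) → ℝ) v) :
    ∃ w : Cinf E, IsUnit w ∧ f = w ^ 2 := by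
  let w : Cinf E := ⟨_, f.2.comp fun v => Real.contDiffAt_sqrt (hf v).ne'⟩
  refine ⟨w, isUnit_of_pos fun v => Real.sqrt_pos.2 (hf v), ?_⟩
  exact Subtype.ext <| funext fun v => (Real.sq_sqrt (hf v).le).symm

variable {I : Ideal (Cinf E)}

theorem exists_nonneg_lift_of_isSumSq {a : Cinf E ⧸ I} (ha : IsSumSq a) :
    ∃ f : Cinf E, mk I f = a ∧ ∀ v, 0 ≤ (f : (E → ℝ) → ℝ) v := by
  obtain ⟨f, hf, rfl⟩ := ha.exists_preimage_of_surjective mk_surjective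
  exact ⟨f, rfl, isSumSq_nonneg hf⟩

theorem exists_pos_lift_of_isUnit {f : Cinf E} (hf : ∀ v, 0 ≤ (f : (E → ℝ) → ℝ) v)
    (hu : IsUnit (mk I f)) :
    ∃ F : Cinf E, mk I F = mk I f ∧ ∀ v, 0 < (F : (E → ℝ) → ℝ) v := by
  obtain ⟨b, hb⟩ := isUnit_iff_exists_inv.1 hu
  obtain ⟨g, rfl⟩ := mk_surjective b
  refine ⟨f + (f * g - 1) ^ 2, by simp [hb], fun v => ?_⟩
  change 0 < (f : (E → ℝ) → ℝ) v + ((f : (E → ℝ) → ℝ) v * (g : (E → ℝ) → ℝ) v - 1) ^ 2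
  rcases (hf v).eq_or_lt with h0 | hpos
  · simp [← h0]
  · positivity

theorem exists_isUnit_sq_eq_of_pos_lift {F : Cinf E} (hF : ∀ v, 0 < (F : (E → ℝ) → ℝ) v) :
    ∃ w : Cinf E ⧸ I, IsUnit w ∧ mk I F = w ^ 2 := by
  obtain ⟨w, hw, rfl⟩ := exists_isUnit_sq_eq_of_pos hF
  exact ⟨mk I w, hw.map _, map_pow _ w 2⟩

theorem exists_isUnit_sq_eq_of_isSumSq {a : Cinf E ⧸ I} (hs : IsSumSq a) (hu : IsUnit a) :
    ∃ w : Cinf E ⧸ I, IsUnit w ∧ a = w ^ 2 := by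
  obtain ⟨f, rfl, hf⟩ := exists_nonneg_lift_of_isSumSq hs
  obtain ⟨F, hFf, hF⟩ := exists_pos_lift_of_isUnit hf hu
  exact hFf ▸ exists_isUnit_sq_eq_of_pos_lift hF

theorem exists_isUnit_sq_add_eq {u s : Cinf E ⧸ I} (hu : IsUnit u) (hs : IsSumSq s) :
    ∃ w : Cinf E ⧸ I, IsUnit w ∧ u ^ 2 + s = w ^ 2 := by
  obtain ⟨g, rfl⟩ := mk_surjective u
  obtain ⟨f, rfl, hf⟩ := exists_nonneg_lift_of_isSumSq hs
  obtain ⟨P, hPg, hP⟩ := exists_pos_lift_of_isUnit (f := g ^ 2) (fun v => sq_nonneg _)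
    (by rw [map_pow]; exact hu.pow 2)
  have hPf : mk I (P + f) = mk I g ^ 2 + mk I f := by rw [map_add, hPg, map_pow]
  exact hPf ▸ exists_isUnit_sq_eq_of_pos_lift fun v => add_pos_of_pos_of_nonneg (hP v) (hf v)

end Cinf

theorem statement18_general (E : Type) (I : Ideal (Cinf E)) :
    (∀ a : Cinf E ⧸ I, IsSumSq a → IsUnit a → ∃ u : Cinf E ⧸ I, IsUnit u ∧ a = u ^ 2) ∧
    (∀ u s : Cinf E ⧸ I, IsUnit u → IsSumSq s →
      ∃ w : Cinf E ⧸ I, IsUnit w ∧ u ^ 2 + s = w ^ 2) ∧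
    (∀ (k : ℕ), 0 < k → ∀ u : Fin k → Cinf E ⧸ I, (∀ i, IsUnit (u i)) →
      ∃ w : Cinf E ⧸ I, IsUnit w ∧ (∑ i, (u i) ^ 2) = w ^ 2) := by
  refine ⟨fun a hs hu => Cinf.exists_isUnit_sq_eq_of_isSumSq hs hu,
    fun u s hu hs => Cinf.exists_isUnit_sq_add_eq hu hs, ?_⟩
  rintro (_ | k) hk u hu
  · exact absurd hk (lt_irrefl 0)
  rw [Fin.sum_univ_succ]
  exact Cinf.exists_isUnit_sq_add_eq (hu 0) (IsSumSq.sum_sq _ _)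

/-- Let `I` be a `C^∞`-radical ideal of `C^∞(ℝ^E)` and `A = C^∞(ℝ^E)/I`.
Then: (1) every unit of `A` that is a finite sum of squares is the square of a unit;
(2) `(A^×)² + ΣA² = (A^×)²`; (3) every finite nonempty sum of squares of units of `A`
is the square of a unit of `A`. -/
theorem statement18 (E : Type) (I : Ideal (Cinf E)) (hI : IsCinfRadical I) :
    (∀ a : Cinf E ⧸ I, IsSumSq a → IsUnit a → ∃ u : Cinf E ⧸ I, IsUnit u ∧ a = u ^ 2) ∧
    (∀ u s : Cinf E ⧸ I, IsUnit u → IsSumSq s →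
      ∃ w : Cinf E ⧸ I, IsUnit w ∧ u ^ 2 + s = w ^ 2) ∧
    (∀ (k : ℕ), 0 < k → ∀ u : Fin k → Cinf E ⧸ I, (∀ i, IsUnit (u i)) →
      ∃ w : Cinf E ⧸ I, IsUnit w ∧ (∑ i, (u i) ^ 2) = w ^ 2) :=
  statement18_general E I
end
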